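/- Let M be the block matrix [[A, C], [0, D]] with A, D square complex matrices. Then M^d = [[A^d, X], [0, D^d]], where X = ∑_{i=0}^{s-1} (A^d)^{i+2} C D^i D^π + A^π ∑_{i=0}^{r-1} A^i C (D^d)^{i+2} − A^d C D^d, r = ind(A), s = ind(D). -/

import Mathlib

open Matrix Finset

attribute [local instance] Classical.propDecidable

noncomputable def drazin {n : Type*} [Fintype n] [DecidableEq n]
    (A : Matrix n n ℂ) : Matrix n n ℂ :=
  if h : ∃ X : Matrix n n ℂ,
      A * X = X * A ∧ X * A * X = X ∧ ∃ k : ℕ, A ^ (k + 1) * X = A ^ k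
  then h.choose else 0

noncomputable def ind {n : Type*} [Fintype n] [DecidableEq n]
    (A : Matrix n n ℂ) : ℕ :=
  sInf {k : ℕ | (A ^ k).rank = (A ^ (k + 1)).rank}

noncomputable def spi {n : Type*} [Fintype n] [DecidableEq n]
    (A : Matrix n n ℂ) : Matrix n n ℂ :=
  1 - A * drazin A

/-!
Write `M = [[A, C], [0, D]]` and `W = [[A^d, X], [0, D^d]]`, with `X` the corner of the formula.
The Drazin inverse is unique, so it suffices that `W` satisfies the Drazin equations for `M`.
`M W = W M` reduces to the Sylvester-type identity `A X - X D = A^d C - C D^d`: the two sums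
telescope, and their end terms die because `D^s D^π = 0` and `A^π A^r = 0`. `W M W = W` is a
block computation. Finally `M (1 - M W)` is block upper triangular with the nilpotent diagonal
blocks `A A^π` and `D D^π`, hence nilpotent, which is equivalent to the index condition.

Existence of Drazin inverses comes from an annihilating polynomial `X^j q` with `q(0) ≠ 0`, and
`ind A` is an admissible index because `rank A^r = rank A^(r+1)` makes `A^r` a right multiple of
`A^(r+1)`.
-/

open Polynomial

def IsDrazinInverse {M : Type*} [Monoid M] (a x : M) : Prop :=
  Commute a x ∧ x * a * x = x ∧ ∃ k : ℕ, a ^ (k + 1) * x = a ^ k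

section Monoid

variable {M : Type*} [Monoid M] {a x y : M} {k : ℕ}

theorem pow_eq_pow_mul_pow_mul_pow (h : a ^ k = a ^ (k + 1) * y) (m : ℕ) :
    a ^ k = a ^ m * a ^ k * y ^ m := by
  induction m with
  | zero => simp
  | succ m ih =>
    calc a ^ k = a ^ m * (a ^ (k + 1) * y) * y ^ m := by rw [← h, ← ih]
      _ = a ^ (m + 1) * a ^ k * y ^ (m + 1) := by
        rw [pow_succ' a k, pow_succ a m, pow_succ' y m]
        simp only [mul_assoc]

theorem mul_mul_eq_of_pow_succ_mul (hax : Commute a x) (hx : x * a * x = x)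
    (hy : a ^ (k + 1) * y = a ^ k) : x * a * y = x := by
  have hxa : IsIdempotentElem (x * a) := by rw [IsIdempotentElem, ← mul_assoc, hx]
  have hay : a ^ (k + 1) * (a * y) = a ^ (k + 1) := by
    rw [← mul_assoc, ← pow_succ, pow_succ' a (k + 1), mul_assoc, hy, ← pow_succ']
  have hxx : x * (x * a) = x := by rw [← hax.eq, ← mul_assoc, hx]
  have key : x * a * (a * y) = x * a := by
    rw [← hxa.pow_succ_eq k, hax.symm.mul_pow, mul_assoc, hay]
  calc x * a * y = x * (x * a * (a * y)) := by simp only [← mul_assoc, hxx]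
    _ = x := by rw [key, hxx]

theorem mul_mul_eq_of_mul_pow_succ (hax : Commute a x) (hx : x * a * x = x)
    (hy : y * a ^ (k + 1) = a ^ k) : y * a * x = x := by
  have h := mul_mul_eq_of_pow_succ_mul (y := MulOpposite.op y) (k := k) hax.op
    (by rw [← MulOpposite.op_mul, ← MulOpposite.op_mul, ← mul_assoc, hx])
    (by rw [← MulOpposite.op_pow, ← MulOpposite.op_mul, hy, MulOpposite.op_pow])
  apply MulOpposite.op_injective
  rw [← h]
  simp only [MulOpposite.op_mul, mul_assoc]

namespace IsDrazinInverse

theorem unique (hx : IsDrazinInverse a x) (hy : IsDrazinInverse a y) : x = y := by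
  obtain ⟨hax, hxax, k, hk⟩ := hx
  obtain ⟨hay, hyay, l, hl⟩ := hy
  calc x = x * a * y := (mul_mul_eq_of_pow_succ_mul hax hxax hl).symm
    _ = y := mul_mul_eq_of_mul_pow_succ hay hyay (by rw [← (hax.pow_left _).eq, hk])

theorem map {N F : Type*} [Monoid N] [FunLike F M N] [MonoidHomClass F M N] (f : F)
    (h : IsDrazinInverse a x) : IsDrazinInverse (f a) (f x) := by
  obtain ⟨hax, hxax, k, hk⟩ := h
  exact ⟨hax.map f, by rw [← map_mul, ← map_mul, hxax],
    k, by rw [← map_pow, ← map_pow, ← map_mul, hk]⟩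

theorem pow_succ_mul_of_pow_eq (h : IsDrazinInverse a x) (hk : a ^ k = a ^ (k + 1) * y) :
    a ^ (k + 1) * x = a ^ k := by
  obtain ⟨hax, -, l, hl⟩ := h
  have hxl : x * a ^ (l + 1) = a ^ l := by rw [← (hax.pow_left _).eq, hl]
  calc a ^ (k + 1) * x = x * (a * (a ^ l * a ^ k * y ^ l)) := by
        rw [← pow_eq_pow_mul_pow_mul_pow hk, ← pow_succ', (hax.pow_left _).eq]
    _ = a ^ l * a ^ k * y ^ l := by simp only [← mul_assoc, ← pow_succ', hxl]
    _ = a ^ k := (pow_eq_pow_mul_pow_mul_pow hk l).symm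

theorem mul_pow_add_two (h : IsDrazinInverse a x) (n : ℕ) : a * x ^ (n + 2) = x ^ (n + 1) := by
  rw [pow_succ' x (n + 1), pow_succ' x n, ← mul_assoc, ← mul_assoc, h.1.eq, h.2.1]

theorem pow_add_two_mul (h : IsDrazinInverse a x) (n : ℕ) : x ^ (n + 2) * a = x ^ (n + 1) := by
  rw [← ((h.1.pow_right _).eq), mul_pow_add_two h]

theorem mul_mul_pow_succ (h : IsDrazinInverse a x) (n : ℕ) :
    x * a * x ^ (n + 1) = x ^ (n + 1) := by
  rw [pow_succ', ← mul_assoc, h.2.1]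

end IsDrazinInverse

end Monoid

theorem IsDrazinInverse.of_pow_eq_pow_succ_mul {M : Type*} [CommMonoid M] {a y : M} {k : ℕ}
    (h : a ^ k = a ^ (k + 1) * y) : IsDrazinInverse a (a ^ k * y ^ (k + 1)) := by
  have hk := pow_eq_pow_mul_pow_mul_pow h (k + 1)
  refine ⟨Commute.all _ _, ?_, k, ?_⟩
  · calc a ^ k * y ^ (k + 1) * a * (a ^ k * y ^ (k + 1))
          = a ^ (k + 1) * a ^ k * y ^ (k + 1) * y ^ (k + 1) := by
            simp only [pow_succ, mul_comm, mul_left_comm, mul_assoc]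
      _ = a ^ k * y ^ (k + 1) := by rw [← hk]
  · rw [← mul_assoc, ← hk]

theorem exists_isDrazinInverse_of_isAlgebraic {K R : Type*} [Field K] [Ring R] [Algebra K R]
    {a : R} (ha : IsAlgebraic K a) : ∃ x, IsDrazinInverse a x := by
  obtain ⟨p, hp, hpa⟩ := ha
  obtain ⟨q, hpq, hq⟩ := p.exists_eq_pow_rootMultiplicity_mul_and_not_dvd hp 0
  rw [map_zero, sub_zero] at hpq hq
  obtain ⟨u, v, huv⟩ := (irreducible_X.coprime_iff_not_dvd).2 hq
  set j := p.rootMultiplicity 0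
  -- `a` has a Drazin inverse already in the commutative ring `K[X] ⧸ ker (aeval a)`
  let φ := RingHom.kerLift (aeval a : K[X] →ₐ[K] R).toRingHom
  let π := Ideal.Quotient.mk (RingHom.ker (aeval a : K[X] →ₐ[K] R).toRingHom)
  have hj : π X ^ j = π X ^ (j + 1) * π u := by
    rw [← map_pow, ← map_pow, ← map_mul, Ideal.Quotient.eq, RingHom.mem_ker]
    have : X ^ j - X ^ (j + 1) * u = v * p := by
      rw [hpq]
      linear_combination (-X ^ j) * huv
    simp [this, hpa]
  have hφ : φ (π X) = a := (RingHom.kerLift_mk _ X).trans (aeval_X a)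
  exact ⟨_, hφ ▸ (IsDrazinInverse.of_pow_eq_pow_succ_mul hj).map φ⟩

theorem Matrix.exists_isDrazinInverse {n K : Type*} [Fintype n] [DecidableEq n] [Field K]
    (A : Matrix n n K) : ∃ X, IsDrazinInverse A X :=
  exists_isDrazinInverse_of_isAlgebraic
    ⟨A.charpoly, A.charpoly_monic.ne_zero, A.aeval_self_charpoly⟩

section Ring

variable {R : Type*} [Ring R] {a x : R}

namespace IsDrazinInverse

theorem one_sub_mul_mul_mul (h : IsDrazinInverse a x) : (1 - a * x) * (a * x) = 0 := by
  rw [sub_mul, one_mul, mul_assoc, ← mul_assoc x, h.2.1, sub_self]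

theorem mul_mul_one_sub_mul (h : IsDrazinInverse a x) : x * a * (1 - a * x) = 0 := by
  rw [mul_sub, mul_one, h.1.eq, ← mul_assoc, h.2.1, sub_self]

theorem pow_mul_one_sub_mul {k : ℕ} (hk : a ^ (k + 1) * x = a ^ k) :
    a ^ k * (1 - a * x) = 0 := by
  rw [mul_sub, mul_one, ← mul_assoc, ← pow_succ, hk, sub_self]

theorem mul_one_sub_mul_pow_succ (hax : Commute a x) (hx : x * a * x = x) (n : ℕ) :
    (a * (1 - a * x)) ^ (n + 1) = a ^ (n + 1) * (1 - a * x) := by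
  have hπ : IsIdempotentElem (1 - a * x) :=
    IsIdempotentElem.one_sub (a := a * x)
      (by rw [IsIdempotentElem, mul_assoc, ← mul_assoc x, hx])
  rw [((Commute.one_right a).sub_right ((Commute.refl a).mul_right hax)).mul_pow,
    hπ.pow_succ_eq]

end IsDrazinInverse

theorem isDrazinInverse_iff :
    IsDrazinInverse a x ↔ Commute a x ∧ x * a * x = x ∧ IsNilpotent (a * (1 - a * x)) := by
  refine ⟨fun ⟨hax, hx, k, hk⟩ => ⟨hax, hx, k + 1, ?_⟩,
    fun ⟨hax, hx, n, hn⟩ => ⟨hax, hx, n + 1, ?_⟩⟩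
  · rw [IsDrazinInverse.mul_one_sub_mul_pow_succ hax hx, pow_succ', mul_assoc,
      IsDrazinInverse.pow_mul_one_sub_mul hk, mul_zero]
  · have h : a ^ (n + 1) * (1 - a * x) = 0 := by
      rw [← IsDrazinInverse.mul_one_sub_mul_pow_succ hax hx, pow_succ, hn, zero_mul]
    rw [mul_sub, mul_one, sub_eq_zero, ← mul_assoc, ← pow_succ] at h
    exact h.symm

end Ring

theorem Matrix.isNilpotent_fromBlocks_zero₂₁ {R p q : Type*} [Semiring R] [Fintype p]
    [Fintype q] [DecidableEq p] [DecidableEq q] {A : Matrix p p R} {D : Matrix q q R}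
    (B : Matrix p q R)
    (hA : IsNilpotent A) (hD : IsNilpotent D) : IsNilpotent (fromBlocks A B 0 D) := by
  have hpow : ∀ k : ℕ, ∃ B', fromBlocks A B 0 D ^ k = fromBlocks (A ^ k) B' 0 (D ^ k) := by
    intro k
    induction k with
    | zero => exact ⟨0, by simp [fromBlocks_one]⟩
    | succ k ih =>
      obtain ⟨B', hB'⟩ := ih
      exact ⟨A ^ k * B + B' * D, by simp [pow_succ, hB', fromBlocks_multiply]⟩
  obtain ⟨i, hi⟩ := hA
  obtain ⟨j, hj⟩ := hD
  obtain ⟨B₁, hB₁⟩ := hpow i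
  obtain ⟨B₂, hB₂⟩ := hpow j
  exact ⟨i + j, by simp [pow_add, hB₁, hB₂, hi, hj, fromBlocks_multiply]⟩

section Corner

variable {R p q : Type*} [Ring R] [Fintype p] [Fintype q] [DecidableEq p] [DecidableEq q]

def drazinCorner (A Ad : Matrix p p R) (D Dd : Matrix q q R) (C : Matrix p q R) (r s : ℕ) :
    Matrix p q R :=
  ∑ i ∈ range s, Ad ^ (i + 2) * C * D ^ i * (1 - D * Dd) +
    (1 - A * Ad) * ∑ i ∈ range r, A ^ i * C * Dd ^ (i + 2) - Ad * C * Dd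

variable {A Ad : Matrix p p R} {D Dd : Matrix q q R} (C : Matrix p q R)

theorem sylvester_sum_drazin_pow_mul_pow (hA : IsDrazinInverse A Ad) (hD : Commute D Dd)
    {s : ℕ} (hs : D ^ s * (1 - D * Dd) = 0) :
    A * ∑ i ∈ range s, Ad ^ (i + 2) * C * D ^ i * (1 - D * Dd) -
        (∑ i ∈ range s, Ad ^ (i + 2) * C * D ^ i * (1 - D * Dd)) * D =
      Ad * C * (1 - D * Dd) := by
  have hπ : Commute D (1 - D * Dd) :=
    (Commute.one_right D).sub_right ((Commute.refl D).mul_right hD)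
  let g : ℕ → Matrix p q R := fun i => Ad ^ (i + 1) * C * D ^ i * (1 - D * Dd)
  have hterm : ∀ i ∈ range s, A * (Ad ^ (i + 2) * C * D ^ i * (1 - D * Dd)) -
      Ad ^ (i + 2) * C * D ^ i * (1 - D * Dd) * D = g i - g (i + 1) := by
    intro i _
    simp only [g, ← Matrix.mul_assoc, hA.mul_pow_add_two]
    rw [Matrix.mul_assoc _ (1 - D * Dd), ← hπ.eq, ← Matrix.mul_assoc,
      Matrix.mul_assoc (Ad ^ (i + 2) * C) (D ^ i) D, ← pow_succ]
  rw [Matrix.mul_sum, Matrix.sum_mul, ← sum_sub_distrib, sum_congr rfl hterm, sum_range_sub']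
  simp [g, Matrix.mul_assoc, hs]

theorem sylvester_sum_pow_mul_drazin_pow (hD : IsDrazinInverse D Dd) (r : ℕ) :
    A * ∑ i ∈ range r, A ^ i * C * Dd ^ (i + 2) -
        (∑ i ∈ range r, A ^ i * C * Dd ^ (i + 2)) * D =
      A ^ r * C * Dd ^ (r + 1) - C * Dd := by
  let g : ℕ → Matrix p q R := fun i => A ^ i * C * Dd ^ (i + 1)
  have hterm : ∀ i ∈ range r, A * (A ^ i * C * Dd ^ (i + 2)) - A ^ i * C * Dd ^ (i + 2) * D =
      g (i + 1) - g i := by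
    intro i _
    simp only [g, ← Matrix.mul_assoc, ← pow_succ']
    rw [Matrix.mul_assoc _ (Dd ^ (i + 2)), hD.pow_add_two_mul]
  rw [Matrix.mul_sum, Matrix.sum_mul, ← sum_sub_distrib, sum_congr rfl hterm, sum_range_sub]
  simp [g]

theorem drazinCorner_sylvester (hA : IsDrazinInverse A Ad) (hD : IsDrazinInverse D Dd)
    {r s : ℕ} (hr : A ^ (r + 1) * Ad = A ^ r) (hs : D ^ (s + 1) * Dd = D ^ s) :
    A * drazinCorner A Ad D Dd C r s - drazinCorner A Ad D Dd C r s * D = Ad * C - C * Dd := by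
  have h₁ := sylvester_sum_drazin_pow_mul_pow C hA hD.1 (IsDrazinInverse.pow_mul_one_sub_mul hs)
  have h₂ := sylvester_sum_pow_mul_drazin_pow (A := A) C hD r
  have hπA : Commute A (1 - A * Ad) :=
    (Commute.one_right A).sub_right ((Commute.refl A).mul_right hA.1)
  have hπr : (1 - A * Ad) * A ^ r = 0 := by
    rw [← (hπA.pow_left r).eq, IsDrazinInverse.pow_mul_one_sub_mul hr]
  rw [drazinCorner]
  set S₁ := ∑ i ∈ range s, Ad ^ (i + 2) * C * D ^ i * (1 - D * Dd)
  set S₂ := ∑ i ∈ range r, A ^ i * C * Dd ^ (i + 2)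
  set P := 1 - A * Ad with hP
  clear_value S₁ S₂ P
  calc A * (S₁ + P * S₂ - Ad * C * Dd) - (S₁ + P * S₂ - Ad * C * Dd) * D
      = (A * S₁ - S₁ * D) + P * (A * S₂ - S₂ * D) -
          (A * Ad * C * Dd - Ad * C * (Dd * D)) := by
        simp only [Matrix.mul_add, Matrix.mul_sub, Matrix.add_mul, Matrix.sub_mul,
          ← Matrix.mul_assoc, hπA.eq]
        abel
    _ = Ad * C * (1 - D * Dd) + P * (A ^ r * C * Dd ^ (r + 1) - C * Dd) -
          (A * Ad * C * Dd - Ad * C * (D * Dd)) := by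
        rw [h₁, h₂, hD.1.eq]
    _ = Ad * C - C * Dd := by
        simp only [Matrix.mul_sub, ← Matrix.mul_assoc, hπr, Matrix.zero_mul]
        simp only [hP, Matrix.sub_mul, Matrix.mul_one, Matrix.one_mul]
        abel

theorem drazinCorner_outer (hA : IsDrazinInverse A Ad) (hD : IsDrazinInverse D Dd) (r s : ℕ) :
    Ad * A * drazinCorner A Ad D Dd C r s + (Ad * C + drazinCorner A Ad D Dd C r s * D) * Dd =
      drazinCorner A Ad D Dd C r s := by
  rw [drazinCorner]
  set S₁ := ∑ i ∈ range s, Ad ^ (i + 2) * C * D ^ i * (1 - D * Dd) with hS₁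
  set S₂ := ∑ i ∈ range r, A ^ i * C * Dd ^ (i + 2) with hS₂
  have h₁ : Ad * (A * S₁) = S₁ := by
    simp only [hS₁, Matrix.mul_sum, ← Matrix.mul_assoc, hA.mul_mul_pow_succ]
  have h₂ : S₁ * (D * Dd) = 0 := by
    simp only [hS₁, Matrix.sum_mul, Matrix.mul_assoc, hD.one_sub_mul_mul_mul, Matrix.mul_zero,
      sum_const_zero]
  have h₃ : S₂ * (D * Dd) = S₂ := by
    simp only [hS₂, Matrix.sum_mul, Matrix.mul_assoc, ← Matrix.mul_assoc (Dd ^ _),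
      hD.pow_add_two_mul, ← pow_succ]
  have hP : Ad * A * (1 - A * Ad) = 0 := hA.mul_mul_one_sub_mul
  have hAd : Ad * A * Ad = Ad := hA.2.1
  have hDd : Dd * (D * Dd) = Dd := by rw [← Matrix.mul_assoc, hD.2.1]
  set P := 1 - A * Ad
  clear_value S₁ S₂ P
  simp only [Matrix.mul_add, Matrix.mul_sub, Matrix.add_mul, Matrix.sub_mul, Matrix.mul_assoc,
    h₁, h₂, h₃, hDd]
  simp only [← Matrix.mul_assoc, hP, hAd, Matrix.zero_mul]
  abel

theorem isDrazinInverse_fromBlocks (hA : IsDrazinInverse A Ad) (hD : IsDrazinInverse D Dd)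
    {r s : ℕ} (hr : A ^ (r + 1) * Ad = A ^ r) (hs : D ^ (s + 1) * Dd = D ^ s) :
    IsDrazinInverse (fromBlocks A C 0 D) (fromBlocks Ad (drazinCorner A Ad D Dd C r s) 0 Dd) := by
  have hsyl := drazinCorner_sylvester C hA hD hr hs
  have hfix := drazinCorner_outer C hA hD r s
  set X := drazinCorner A Ad D Dd C r s
  rw [isDrazinInverse_iff] at hA hD ⊢
  refine ⟨?_, ?_, ?_⟩
  · show _ = _
    simp only [fromBlocks_multiply, Matrix.mul_zero, Matrix.zero_mul, add_zero, zero_add]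
    rw [hA.1.eq, hD.1.eq, sub_eq_sub_iff_add_eq_add.mp hsyl]
  · simp only [fromBlocks_multiply, Matrix.mul_zero, Matrix.zero_mul, add_zero, zero_add]
    rw [hA.2.1, hD.2.1, hfix]
  · rw [← fromBlocks_one, fromBlocks_multiply, sub_eq_add_neg, fromBlocks_neg, fromBlocks_add,
      fromBlocks_multiply]
    simp only [Matrix.mul_zero, Matrix.zero_mul, add_zero, zero_add, neg_zero, ← sub_eq_add_neg]
    exact Matrix.isNilpotent_fromBlocks_zero₂₁ _ hA.2.2 hD.2.2

end Corner

theorem Matrix.exists_mul_eq_of_rank_mul_eq {K m n o : Type*} [Field K] [Fintype n] [Fintype o]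
    [DecidableEq n] (A : Matrix m n K) (B : Matrix n o K) (h : (A * B).rank = A.rank) :
    ∃ Y : Matrix o n K, A * B * Y = A := by
  have hrange : LinearMap.range (A * B).mulVecLin = LinearMap.range A.mulVecLin := by
    refine Submodule.eq_of_le_of_finrank_eq ?_ h
    rw [mulVecLin_mul]
    exact LinearMap.range_comp_le_range _ _
  have hcol : ∀ j, A.col j ∈ LinearMap.range (A * B).mulVecLin := fun j => by
    rw [hrange, ← mulVec_single_one]
    exact LinearMap.mem_range_self _ _
  choose w hw using hcol
  exact ⟨(of w)ᵀ, ext fun i j => congrFun (hw j) i⟩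

section Complex

variable {n : Type*} [Fintype n] [DecidableEq n]

theorem isDrazinInverse_drazin (A : Matrix n n ℂ) : IsDrazinInverse A (drazin A) := by
  unfold drazin
  split_ifs with h
  · exact h.choose_spec
  · exact absurd A.exists_isDrazinInverse h

theorem rank_pow_ind_eq (A : Matrix n n ℂ) : (A ^ ind A).rank = (A ^ (ind A + 1)).rank := by
  obtain ⟨_, -, -, k, hk⟩ := A.exists_isDrazinInverse
  have hmem : k ∈ {k : ℕ | (A ^ k).rank = (A ^ (k + 1)).rank} :=
    le_antisymm (hk ▸ rank_mul_le_left _ _) (pow_succ A k ▸ rank_mul_le_left _ _)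
  exact Nat.sInf_mem ⟨k, hmem⟩

theorem pow_ind_succ_mul_drazin (A : Matrix n n ℂ) : A ^ (ind A + 1) * drazin A = A ^ ind A := by
  obtain ⟨Y, hY⟩ :=
    (A ^ ind A).exists_mul_eq_of_rank_mul_eq A (by rw [← pow_succ, rank_pow_ind_eq])
  rw [← pow_succ] at hY
  exact (isDrazinInverse_drazin A).pow_succ_mul_of_pow_eq hY.symm

end Complex

theorem stmt14 {n m : ℕ} (A : Matrix (Fin n) (Fin n) ℂ) (D : Matrix (Fin m) (Fin m) ℂ)
    (C : Matrix (Fin n) (Fin m) ℂ) :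
    drazin (Matrix.fromBlocks A C 0 D) =
      Matrix.fromBlocks (drazin A)
        (∑ i ∈ range (ind D), (drazin A) ^ (i + 2) * C * D ^ i * spi D +
          spi A * ∑ i ∈ range (ind A), A ^ i * C * (drazin D) ^ (i + 2) -
          drazin A * C * drazin D)
        0 (drazin D) :=
  (isDrazinInverse_drazin _).unique <|
    isDrazinInverse_fromBlocks C (isDrazinInverse_drazin A) (isDrazinInverse_drazin D)
      (pow_ind_succ_mul_drazin A) (pow_ind_succ_mul_drazin D)
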